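/- Let λ be a fixed partition. If m, n → ∞ with n/m → α ≥ 0, then h((n^m)) / h(λ + (n^m)) → (1/h(λ)) · (α + 1)^{−|λ|}, where λ + (n^m) is the partition (λ_1 + n, …, λ_m + n) (for m ≥ length of λ). -/
import Mathlib


open Finset Filter Topology

/-- The product of the hook lengths of a partition with at most `n` parts,
given by the (weakly decreasing) row-length function `l`. -/
def hookProd (n : ℕ) (l : ℕ → ℕ) : ℕ :=
  ∏ i ∈ Finset.range n, ∏ j ∈ Finset.range (l i),
    (l i - j + ((Finset.Ico (i + 1) n).filter (fun i' => j < l i')).card)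

lemma hookProd_pos (n : ℕ) (l : ℕ → ℕ) : 0 < hookProd n l := by
  apply Finset.prod_pos
  intro i _
  apply Finset.prod_pos
  intro j hj
  simp only [Finset.mem_range] at hj
  omega

lemma row (c n li : ℕ) :
    (∏ j ∈ Finset.range n, (n + li - j + c)) * ∏ k ∈ Finset.range li, (k + 1 + c)
    = (∏ j ∈ Finset.range n, (n - j + c)) * ∏ k ∈ Finset.range li, (k + 1 + n + c) := by
  have h1 : ∏ j ∈ Finset.range n, (n + li - j + c)
      = ∏ t ∈ Finset.range n, (li + t + 1 + c) := by
    rw [← Finset.prod_range_reflect]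
    apply Finset.prod_congr rfl
    intro j hj
    simp only [Finset.mem_range] at hj
    omega
  have h2 : ∏ j ∈ Finset.range n, (n - j + c)
      = ∏ t ∈ Finset.range n, (t + 1 + c) := by
    rw [← Finset.prod_range_reflect]
    apply Finset.prod_congr rfl
    intro j hj
    simp only [Finset.mem_range] at hj
    omega
  rw [h1, h2]
  have h3 := Finset.prod_range_add (fun t => t + 1 + c) li n
  have h4 := Finset.prod_range_add (fun t => t + 1 + c) n li
  calc (∏ t ∈ Finset.range n, (li + t + 1 + c)) * ∏ k ∈ Finset.range li, (k + 1 + c)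
      = ∏ t ∈ Finset.range (li + n), (t + 1 + c) := by rw [h3]; ring
    _ = ∏ t ∈ Finset.range (n + li), (t + 1 + c) := by rw [add_comm]
    _ = (∏ t ∈ Finset.range n, (t + 1 + c)) * ∏ k ∈ Finset.range li, (k + 1 + n + c) := by
        rw [h4]; congr 1; apply Finset.prod_congr rfl; intro k _; ring

lemma filter_eq (L : ℕ) (l : ℕ → ℕ) (hlen : ∀ i, L ≤ i → l i = 0) (m : ℕ) (hm : L ≤ m)
    (a j : ℕ) :
    (Finset.Ico a m).filter (fun i' => j < l i') = (Finset.Ico a L).filter (fun i' => j < l i') := by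
  ext x
  simp only [Finset.mem_filter, Finset.mem_Ico]
  constructor
  · rintro ⟨⟨h1, h2⟩, h3⟩
    refine ⟨⟨h1, ?_⟩, h3⟩
    by_contra h
    push_neg at h
    rw [hlen x h] at h3
    omega
  · rintro ⟨⟨h1, h2⟩, h3⟩
    exact ⟨⟨h1, by omega⟩, h3⟩

lemma hookProd_mu (L : ℕ) (l : ℕ → ℕ) (hlen : ∀ i, L ≤ i → l i = 0) (m n : ℕ) (hm : L ≤ m) :
    hookProd m (fun i => if i < m then n + l i else 0)
    = (∏ i ∈ Finset.range m, ∏ j ∈ Finset.range n, (n + l i - j + (m - (i + 1))))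
      * hookProd L l := by
  unfold hookProd
  calc ∏ i ∈ Finset.range m,
        ∏ j ∈ Finset.range ((fun i => if i < m then n + l i else 0) i),
          ((fun i => if i < m then n + l i else 0) i - j +
            ((Finset.Ico (i + 1) m).filter
              (fun i' => j < (fun i => if i < m then n + l i else 0) i')).card)
      = ∏ i ∈ Finset.range m,
          ((∏ j ∈ Finset.range n, (n + l i - j + (m - (i + 1)))) *
            (∏ j ∈ Finset.range (l i),
              (l i - j + ((Finset.Ico (i + 1) L).filter (fun i' => j < l i')).card))) := by
        apply Finset.prod_congr rfl
        intro i hi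
        simp only [Finset.mem_range] at hi
        simp only [if_pos hi]
        have hfilt : ∀ j : ℕ, ((Finset.Ico (i + 1) m).filter
            (fun i' => j < if i' < m then n + l i' else 0))
            = (Finset.Ico (i + 1) m).filter (fun i' => j < n + l i') := by
          intro j
          apply Finset.filter_congr
          intro x hx
          simp only [Finset.mem_Ico] at hx
          rw [if_pos hx.2]
        simp only [hfilt]
        rw [Finset.prod_range_add]
        congr 1
        · apply Finset.prod_congr rfl
          intro j hj
          simp only [Finset.mem_range] at hj
          rw [Finset.filter_true_of_mem, Nat.card_Ico]
          intro x _
          omega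
        · apply Finset.prod_congr rfl
          intro j hj
          simp only [Finset.mem_range] at hj
          have h1 : ((Finset.Ico (i + 1) m).filter (fun i' => n + j < n + l i'))
              = (Finset.Ico (i + 1) L).filter (fun i' => j < l i') := by
            rw [← filter_eq L l hlen m hm]
            apply Finset.filter_congr
            intro x _
            simp only [Nat.add_lt_add_iff_left]
          rw [h1]
          congr 1
          omega
    _ = (∏ i ∈ Finset.range m, ∏ j ∈ Finset.range n, (n + l i - j + (m - (i + 1)))) *
          (∏ i ∈ Finset.range m, ∏ j ∈ Finset.range (l i),
            (l i - j + ((Finset.Ico (i + 1) L).filter (fun i' => j < l i')).card)) :=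
        Finset.prod_mul_distrib
    _ = (∏ i ∈ Finset.range m, ∏ j ∈ Finset.range n, (n + l i - j + (m - (i + 1)))) *
          (∏ i ∈ Finset.range L, ∏ j ∈ Finset.range (l i),
            (l i - j + ((Finset.Ico (i + 1) L).filter (fun i' => j < l i')).card)) := by
        congr 1
        symm
        apply Finset.prod_subset (Finset.range_subset_range.2 hm)
        intro x _ hx
        simp only [Finset.mem_range, not_lt] at hx
        rw [hlen x hx]
        simp

lemma hookProd_rect (m n : ℕ) :
    hookProd m (fun i => if i < m then n else 0)
    = ∏ i ∈ Finset.range m, ∏ j ∈ Finset.range n, (n - j + (m - (i + 1))) := by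
  unfold hookProd
  apply Finset.prod_congr rfl
  intro i hi
  simp only [Finset.mem_range] at hi
  simp only [if_pos hi]
  apply Finset.prod_congr rfl
  intro j hj
  simp only [Finset.mem_range] at hj
  rw [Finset.filter_true_of_mem, Nat.card_Ico]
  intro x hx
  simp only [Finset.mem_Ico] at hx
  rw [if_pos hx.2]
  exact hj

lemma key (L : ℕ) (l : ℕ → ℕ) (hlen : ∀ i, L ≤ i → l i = 0) (m n : ℕ) (hm : L ≤ m) :
    hookProd m (fun i => if i < m then n + l i else 0) *
      ∏ i ∈ Finset.range L, ∏ k ∈ Finset.range (l i), (k + 1 + (m - (i + 1)))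
    = hookProd m (fun i => if i < m then n else 0) * hookProd L l *
      ∏ i ∈ Finset.range L, ∏ k ∈ Finset.range (l i), (k + 1 + n + (m - (i + 1))) := by
  rw [hookProd_mu L l hlen m n hm, hookProd_rect]
  have hsplit : ∀ f : ℕ → ℕ,
      ∏ i ∈ Finset.range m, f i = (∏ i ∈ Finset.range L, f i) * ∏ i ∈ Finset.Ico L m, f i := by
    intro f
    rw [Finset.range_eq_Ico, ← Finset.prod_Ico_consecutive _ (Nat.zero_le L) hm,
      ← Finset.range_eq_Ico]
  rw [hsplit (fun i => ∏ j ∈ Finset.range n, (n + l i - j + (m - (i + 1)))),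
    hsplit (fun i => ∏ j ∈ Finset.range n, (n - j + (m - (i + 1))))]
  have hIco : ∏ i ∈ Finset.Ico L m, ∏ j ∈ Finset.range n, (n + l i - j + (m - (i + 1)))
      = ∏ i ∈ Finset.Ico L m, ∏ j ∈ Finset.range n, (n - j + (m - (i + 1))) := by
    apply Finset.prod_congr rfl
    intro i hi
    simp only [Finset.mem_Ico] at hi
    rw [hlen i hi.1]
    simp
  rw [hIco]
  have hL' : (∏ i ∈ Finset.range L, ∏ j ∈ Finset.range n, (n + l i - j + (m - (i + 1)))) *
        ∏ i ∈ Finset.range L, ∏ k ∈ Finset.range (l i), (k + 1 + (m - (i + 1)))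
      = (∏ i ∈ Finset.range L, ∏ j ∈ Finset.range n, (n - j + (m - (i + 1)))) *
        ∏ i ∈ Finset.range L, ∏ k ∈ Finset.range (l i), (k + 1 + n + (m - (i + 1))) := by
    rw [← Finset.prod_mul_distrib, ← Finset.prod_mul_distrib]
    exact Finset.prod_congr rfl (fun i _ => row (m - (i + 1)) n (l i))
  calc ((∏ i ∈ Finset.range L, ∏ j ∈ Finset.range n, (n + l i - j + (m - (i + 1)))) *
          ∏ i ∈ Finset.Ico L m, ∏ j ∈ Finset.range n, (n - j + (m - (i + 1)))) * hookProd L l *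
          ∏ i ∈ Finset.range L, ∏ k ∈ Finset.range (l i), (k + 1 + (m - (i + 1)))
      = ((∏ i ∈ Finset.range L, ∏ j ∈ Finset.range n, (n + l i - j + (m - (i + 1)))) *
          ∏ i ∈ Finset.range L, ∏ k ∈ Finset.range (l i), (k + 1 + (m - (i + 1)))) *
          ((∏ i ∈ Finset.Ico L m, ∏ j ∈ Finset.range n, (n - j + (m - (i + 1)))) *
            hookProd L l) := by ring
    _ = ((∏ i ∈ Finset.range L, ∏ j ∈ Finset.range n, (n - j + (m - (i + 1)))) *
          ∏ i ∈ Finset.range L, ∏ k ∈ Finset.range (l i), (k + 1 + n + (m - (i + 1)))) *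
          ((∏ i ∈ Finset.Ico L m, ∏ j ∈ Finset.range n, (n - j + (m - (i + 1)))) *
            hookProd L l) := by rw [hL']
    _ = _ := by ring

lemma factor_tendsto (α : ℝ) (m n : ℕ → ℕ)
    (hm : Filter.Tendsto m Filter.atTop Filter.atTop)
    (hratio : Filter.Tendsto (fun j => (n j : ℝ) / (m j : ℝ)) Filter.atTop (𝓝 α))
    (hα : 0 ≤ α) (i k : ℕ) :
    Filter.Tendsto (fun j => ((k + 1 + (m j - (i + 1)) : ℕ) : ℝ) /
      ((k + 1 + n j + (m j - (i + 1)) : ℕ) : ℝ)) Filter.atTop (𝓝 (1 / (1 + α))) := by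
  have hM : Filter.Tendsto (fun j => (m j : ℝ)) Filter.atTop Filter.atTop :=
    tendsto_natCast_atTop_atTop.comp hm
  set c : ℝ := (k : ℝ) + 1 - ((i : ℝ) + 1) with hc
  have hev : ∀ᶠ j in Filter.atTop, i + 1 ≤ m j := hm.eventually_ge_atTop (i + 1)
  have h0 : Filter.Tendsto (fun j => c / (m j : ℝ)) Filter.atTop (𝓝 0) :=
    Filter.Tendsto.div_atTop tendsto_const_nhds hM
  have h1 : Filter.Tendsto (fun j => ((m j : ℝ) + c) / (m j : ℝ)) Filter.atTop (𝓝 1) := by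
    have := (tendsto_const_nhds (x := (1:ℝ))).add h0
    rw [add_zero] at this
    apply this.congr'
    filter_upwards [hM.eventually_ge_atTop 1] with j hj
    have hj0 : (m j : ℝ) ≠ 0 := by linarith
    field_simp
  have h2 : Filter.Tendsto (fun j => ((m j : ℝ) + (n j : ℝ) + c) / (m j : ℝ))
      Filter.atTop (𝓝 (1 + α)) := by
    have := ((tendsto_const_nhds (x := (1:ℝ))).add hratio).add h0
    rw [add_zero] at this
    apply this.congr'
    filter_upwards [hM.eventually_ge_atTop 1] with j hj
    have hj0 : (m j : ℝ) ≠ 0 := by linarith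
    field_simp
  have hne : (1 : ℝ) + α ≠ 0 := by linarith
  have hdiv := h1.div h2 hne
  apply hdiv.congr'
  filter_upwards [hev, hM.eventually_ge_atTop 1] with j hj hj1
  have hj0 : (m j : ℝ) ≠ 0 := by linarith
  have hcast : ((m j - (i + 1) : ℕ) : ℝ) = (m j : ℝ) - ((i : ℝ) + 1) := by
    push_cast [Nat.cast_sub hj]
    ring
  have hiR : ((i : ℝ) + 1) ≤ (m j : ℝ) := by exact_mod_cast hj
  have hden : (m j : ℝ) + (n j : ℝ) + c ≠ 0 := by
    have hn0 : (0:ℝ) ≤ (n j : ℝ) := Nat.cast_nonneg _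
    have hk0 : (0:ℝ) ≤ (k : ℝ) := Nat.cast_nonneg _
    rw [hc]
    nlinarith
  have e1 : ((k + 1 + (m j - (i + 1)) : ℕ) : ℝ) = (m j : ℝ) + c := by
    push_cast [hcast]; rw [hc]; ring
  have e2 : ((k + 1 + n j + (m j - (i + 1)) : ℕ) : ℝ) = (m j : ℝ) + (n j : ℝ) + c := by
    push_cast [hcast]; rw [hc]; ring
  simp only [Pi.div_apply]
  rw [e1, e2]
  rw [div_div_div_cancel_right₀]
  exact hj0

lemma ratio_eq (L : ℕ) (l : ℕ → ℕ) (hlen : ∀ i, L ≤ i → l i = 0) (m n : ℕ) (hm : L ≤ m) :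
    (hookProd m (fun i => if i < m then n else 0) : ℝ) /
      (hookProd m (fun i => if i < m then n + l i else 0) : ℝ)
    = (1 / (hookProd L l : ℝ)) *
      ∏ i ∈ Finset.range L, ∏ k ∈ Finset.range (l i),
        (((k + 1 + (m - (i + 1)) : ℕ) : ℝ) / ((k + 1 + n + (m - (i + 1)) : ℕ) : ℝ)) := by
  have hμ : (0:ℝ) < (hookProd m (fun i => if i < m then n + l i else 0) : ℝ) := by
    exact_mod_cast hookProd_pos m _
  have hL0 : (0:ℝ) < (hookProd L l : ℝ) := by exact_mod_cast hookProd_pos L l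
  have hB : (0:ℝ) < ∏ i ∈ Finset.range L, ∏ k ∈ Finset.range (l i),
      ((k + 1 + n + (m - (i + 1)) : ℕ) : ℝ) := by
    apply Finset.prod_pos
    intro i _
    apply Finset.prod_pos
    intro k _
    positivity
  have hkR : (hookProd m (fun i => if i < m then n + l i else 0) : ℝ) *
        (∏ i ∈ Finset.range L, ∏ k ∈ Finset.range (l i), ((k + 1 + (m - (i + 1)) : ℕ) : ℝ))
      = (hookProd m (fun i => if i < m then n else 0) : ℝ) * (hookProd L l : ℝ) *
        (∏ i ∈ Finset.range L, ∏ k ∈ Finset.range (l i), ((k + 1 + n + (m - (i + 1)) : ℕ) : ℝ)) := by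
    exact_mod_cast key L l hlen m n hm
  have hrw : ∏ i ∈ Finset.range L, ∏ k ∈ Finset.range (l i),
        (((k + 1 + (m - (i + 1)) : ℕ) : ℝ) / ((k + 1 + n + (m - (i + 1)) : ℕ) : ℝ))
      = (∏ i ∈ Finset.range L, ∏ k ∈ Finset.range (l i), ((k + 1 + (m - (i + 1)) : ℕ) : ℝ)) /
        (∏ i ∈ Finset.range L, ∏ k ∈ Finset.range (l i), ((k + 1 + n + (m - (i + 1)) : ℕ) : ℝ)) := by
    simp [Finset.prod_div_distrib]
  rw [hrw]
  set A := ∏ i ∈ Finset.range L, ∏ k ∈ Finset.range (l i), ((k + 1 + (m - (i + 1)) : ℕ) : ℝ)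
  set B := ∏ i ∈ Finset.range L, ∏ k ∈ Finset.range (l i), ((k + 1 + n + (m - (i + 1)) : ℕ) : ℝ)
  set X := (hookProd m (fun i => if i < m then n + l i else 0) : ℝ)
  set Y := (hookProd m (fun i => if i < m then n else 0) : ℝ)
  set H := (hookProd L l : ℝ)
  field_simp
  linear_combination (-1 : ℝ) * hkR

/-- for a fixed partition `λ` (of length at most `L`), if
`m, n → ∞` with `n/m → α ≥ 0`, then
`h((n^m)) / h(λ + (n^m)) → (1/h(λ)) (α+1)^{-|λ|}`. -/
theorem stmt9 (L : ℕ) (l : ℕ → ℕ) (hmono : Antitone l)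
    (hlen : ∀ i, L ≤ i → l i = 0)
    (α : ℝ) (hα : 0 ≤ α) (m n : ℕ → ℕ)
    (hm : Tendsto m atTop atTop)
    (hratio : Tendsto (fun j => (n j : ℝ) / (m j : ℝ)) atTop (𝓝 α)) :
    Tendsto (fun j =>
        (hookProd (m j) (fun i => if i < m j then n j else 0) : ℝ) /
          (hookProd (m j) (fun i => if i < m j then n j + l i else 0) : ℝ))
      atTop
      (𝓝 ((1 / (hookProd L l : ℝ)) *
        (α + 1) ^ (-(∑ i ∈ Finset.range L, l i : ℤ)))) := by
  
  have hne : (1:ℝ) + α ≠ 0 := by linarith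
  have hval : (1 / (hookProd L l : ℝ)) * (α + 1) ^ (-(∑ i ∈ Finset.range L, l i : ℤ))
      = (1 / (hookProd L l : ℝ)) *
        ∏ i ∈ Finset.range L, ∏ _k ∈ Finset.range (l i), (1 / (1 + α)) := by
    congr 1
    have : ∏ i ∈ Finset.range L, ∏ _k ∈ Finset.range (l i), (1 / (1 + α))
        = ∏ i ∈ Finset.range L, (1 / (1 + α)) ^ (l i) := by
      apply Finset.prod_congr rfl
      intro i _
      rw [Finset.prod_const, Finset.card_range]
    rw [this, Finset.prod_pow_eq_pow_sum]
    rw [zpow_neg,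
      show (∑ i ∈ Finset.range L, (l i : ℤ)) = ((∑ i ∈ Finset.range L, l i : ℕ) : ℤ) by
        push_cast; ring,
      zpow_natCast, one_div, inv_pow, add_comm α 1]
  rw [hval]
  have hprod : Filter.Tendsto (fun j => (1 / (hookProd L l : ℝ)) *
      ∏ i ∈ Finset.range L, ∏ k ∈ Finset.range (l i),
        (((k + 1 + (m j - (i + 1)) : ℕ) : ℝ) / ((k + 1 + n j + (m j - (i + 1)) : ℕ) : ℝ)))
      Filter.atTop
      (𝓝 ((1 / (hookProd L l : ℝ)) *
        ∏ i ∈ Finset.range L, ∏ _k ∈ Finset.range (l i), (1 / (1 + α)))) := by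
    apply Filter.Tendsto.const_mul
    apply tendsto_finset_prod
    intro i _
    apply tendsto_finset_prod
    intro k _
    exact factor_tendsto α m n hm hratio hα i k
  apply hprod.congr'
  filter_upwards [hm.eventually_ge_atTop L] with j hj
  exact (ratio_eq L l hlen (m j) (n j) hj).symm
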